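/- For every n ≥ 0, the spine process satisfies 𝕊₀ⁿ = (𝒬(T̃^{−1}(n)), …, 𝒬(1)) ∘ ϑ^n, where 𝒬(k) = μ₀∘θ_{T(k−1)} with μ₀ = Υ_{ζ₀}(𝒫_{τ₀−1}) (the point measure at the ladder epoch with its ζ₀ largest atoms removed), and T̃^{−1}(n) = max{k ≥ 0 : T(k) ≤ n}. -/

import Mathlib

open scoped Classical NNReal
noncomputable section

/-- Finite point measures on `(0,∞)`, modeled as multisets of atoms in `ℝ≥0`. -/
abbrev PtM := Multiset ℝ≥0

/-- A stick: a life-length together with a finite point measure of birth times. -/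
abbrev Stick := ℝ≥0 × PtM

/-- The space of doubly infinite sequences of sticks. -/
abbrev Om := ℤ → Stick

/-- The shift operator `θ_n`. -/
def theta (n : ℤ) (ω : Om) : Om := fun k => ω (n + k)

/-- The dual (time-reversal) operator `ϑ^n`. -/
def dual (n : ℤ) (ω : Om) : Om := fun k => ω (n - k - 1)

/-- Life length of the `k`-th individual. -/
def Vc (ω : Om) (k : ℤ) : ℝ≥0 := (ω k).1

/-- Point measure (ages at childbearing) of the `k`-th individual. -/
def Pc (ω : Om) (k : ℤ) : PtM := (ω k).2

/-- The Lukasiewicz path `S`. -/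
def Sw (ω : Om) (n : ℤ) : ℤ :=
  if 0 ≤ n then ∑ k ∈ Finset.range n.toNat, ((Multiset.card (Pc ω (k : ℤ)) : ℤ) - 1)
  else - ∑ k ∈ Finset.range (-n).toNat, ((Multiset.card (Pc ω (-(k : ℤ) - 1)) : ℤ) - 1)

/-- `π(ν)`: the supremum of the support (largest atom) of a finite point measure. -/
def piM (ν : PtM) : ℝ≥0 := ν.sup

/-- `Υ_j(ν)`: removes the `j` largest atoms of `ν`. -/
def upsilon (j : ℕ) (ν : PtM) : PtM :=
  ((ν.sort (· ≤ ·)).take (Multiset.card ν - j) : List ℝ≥0)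

/-- The map `Φ` driving the spine process dynamics. -/
def phiSp (Y : List PtM) (ν : PtM) : List PtM :=
  if ν = 0 then
    match Y.reverse.dropWhile (fun m => decide (Multiset.card m < 2)) with
    | [] => []
    | h :: t => (upsilon 1 h :: t).reverse
  else Y ++ [ν]

/-- The spine process `𝕊₀ⁿ`. -/
def spine (ω : Om) : ℕ → List PtM
  | 0 => []
  | n + 1 => phiSp (spine ω n) (Pc ω (n : ℤ))

/-- `π` extended to finite sequences of point measures. -/
def piL (Y : List PtM) : ℝ≥0 := (Y.map piM).sum

/-- The chronological height process `ℍ(n) = π(𝕊₀ⁿ)`. -/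
def Hchr (ω : Om) (n : ℕ) : ℝ≥0 := piL (spine ω n)

/-- The genealogical height process
`𝓗(n) = #{k ∈ {0,…,n−1} : S(k+1) ≤ min_{k+1 ≤ j ≤ n} S(j)}`. -/
def genH (ω : Om) (n : ℕ) : ℕ :=
  ((Finset.range n).filter
    (fun k : ℕ => ∀ j : ℕ, j ∈ Finset.Icc (k + 1) n → Sw ω ((k : ℤ) + 1) ≤ Sw ω (j : ℤ))).card

/-- Weak ascending ladder height times `T(k)` (valued `⊤` if nonexistent). -/
def ladderT (ω : Om) : ℕ → ℕ∞
  | 0 => 0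
  | k + 1 => sInf {x : ℕ∞ | ∃ m j : ℕ, x = (m : ℕ∞) ∧ ladderT ω k = (j : ℕ∞) ∧
      j < m ∧ Sw ω (j : ℤ) ≤ Sw ω (m : ℤ)}

/-- `T^{-1}(n) = min{k ≥ 0 : T(k) ≥ n}`. -/
def Tinv (ω : Om) (n : ℕ) : ℕ := sInf {k : ℕ | (n : ℕ∞) ≤ ladderT ω k}

/-- `T̃^{-1}(n) = max{k ≥ 0 : T(k) ≤ n}`. -/
def tildeTinv (ω : Om) (n : ℕ) : ℕ := sSup {k : ℕ | ladderT ω k ≤ (n : ℕ∞)}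

/-- First passage time upward `τ_ℓ = inf{k > 0 : S(k) ≥ ℓ}`. -/
def tauUp (ω : Om) (ℓ : ℤ) : ℕ∞ :=
  sInf {x : ℕ∞ | ∃ k : ℕ, x = (k : ℕ∞) ∧ 0 < k ∧ ℓ ≤ Sw ω (k : ℤ)}

/-- First hitting time downward `τ⁻_ℓ = inf{k ≥ 0 : S(k) = −ℓ}`. -/
def tauDown (ω : Om) (ℓ : ℤ) : ℕ∞ :=
  sInf {x : ℕ∞ | ∃ k : ℕ, x = (k : ℕ∞) ∧ Sw ω (k : ℤ) = -ℓ}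

/-- `τ_ℓ` as a natural number (junk value `0` when infinite). -/
def tauUpN (ω : Om) (ℓ : ℤ) : ℕ := (tauUp ω ℓ).toNat

/-- The undershoot `ζ_ℓ = ℓ − S(τ_ℓ − 1)`. -/
def zetaU (ω : Om) (ℓ : ℤ) : ℤ := ℓ - Sw ω ((tauUpN ω ℓ : ℤ) - 1)

/-- `μ_ℓ = Υ_{ζ_ℓ}(𝒫_{τ_ℓ − 1})`. -/
def muU (ω : Om) (ℓ : ℤ) : PtM := upsilon (zetaU ω ℓ).toNat (Pc ω ((tauUpN ω ℓ : ℤ) - 1))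

/-- `𝒬(k) = μ₀ ∘ θ_{T(k−1)}`. -/
def Qcal (ω : Om) (k : ℕ) : PtM := muU (theta ((ladderT ω (k - 1)).toNat : ℤ) ω) 0

/-- `𝕐(k) = π(𝒬(k))`. -/
def Ybb (ω : Om) (k : ℕ) : ℝ≥0 := piM (Qcal ω k)

/-- The backward maximum `L(m) = max_{0 ≤ k ≤ m} S(−k)`. -/
def Lmax (ω : Om) (m : ℕ) : ℤ :=
  Finset.sup' (Finset.range (m + 1)) Finset.nonempty_range_add_one (fun k => Sw ω (-(k : ℤ)))

/-- The ancestor set `𝒜(n) = {n − T(k)∘ϑ^n : k ≥ 0}` (only finite ladder times). -/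
def Aset (ω : Om) (n : ℕ) : Set ℤ :=
  {a | ∃ k j : ℕ, ladderT (dual (n : ℤ) ω) k = (j : ℕ∞) ∧ a = (n : ℤ) - (j : ℤ)}

/-- `mrca(m,n) = max(𝒜(m) ∩ 𝒜(n))`. -/
def mrcaZ (ω : Om) (m n : ℕ) : ℤ := sSup (Aset ω m ∩ Aset ω n)

/-- `χ(m,k) = inf{j ≥ m+1 : S(j) = S(m+1) − k}`. -/
def chiT (ω : Om) (m k : ℕ) : ℕ∞ :=
  sInf {x : ℕ∞ | ∃ j : ℕ, x = (j : ℕ∞) ∧ m + 1 ≤ j ∧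
    Sw ω (j : ℤ) = Sw ω ((m : ℤ) + 1) - (k : ℤ)}

/-- `χ(m) = inf{j ≥ m+1 : S(j) = S(m) − 1}`. -/
def chiF (ω : Om) (m : ℕ) : ℕ∞ :=
  sInf {x : ℕ∞ | ∃ j : ℕ, x = (j : ℕ∞) ∧ m + 1 ≤ j ∧ Sw ω (j : ℤ) = Sw ω (m : ℤ) - 1}

/-- The functional `D_ℓ(𝕊₀^m)` of the spine, expressed through the dual walk:
`D_ℓ = (Σ_{i : 0 < T(i) ≤ min(τ_ℓ, m)} 𝕐(i) − 1_{τ_ℓ ≤ m} π(μ_ℓ)) ∘ ϑ^m`, with `D_0 ≡ 0`. -/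
def Dfun (ω : Om) (m : ℕ) (ℓ : ℤ) : ℝ :=
  if ℓ < 1 then 0 else
    (∑ i ∈ (Finset.Icc 1 m).filter
        (fun i => 0 < ladderT (dual (m : ℤ) ω) i ∧
          ladderT (dual (m : ℤ) ω) i ≤ min (tauUp (dual (m : ℤ) ω) ℓ) (m : ℕ∞)),
      (Ybb (dual (m : ℤ) ω) i : ℝ))
    - (if tauUp (dual (m : ℤ) ω) ℓ ≤ (m : ℕ∞) then (piM (muU (dual (m : ℤ) ω) ℓ) : ℝ) else 0)

/-- `K_j = 2𝒱(j−1) − ℍ(j)`. -/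
def Kt (ω : Om) (j : ℕ) : ℝ := 2 * ∑ k ∈ Finset.range j, (Vc ω (k : ℤ) : ℝ) - (Hchr ω j : ℝ)

/-- The chronological contour process: on `[K_n, K_{n+1}]` it increases at rate `+1` from
`ℍ(n)` up to `ℍ(n) + V_n` and then decreases at rate `−1` down to `ℍ(n+1)`. -/
def contour (ω : Om) (t : ℝ) : ℝ :=
  let n := sSup {j : ℕ | Kt ω j ≤ t}
  min ((Hchr ω n : ℝ) + (t - Kt ω n)) ((Hchr ω (n + 1) : ℝ) + (Kt ω (n + 1) - t))


/-!
Write `η = ϑ^n ω`. Then `ϑ^(n+1) ω` is `η` with the stick `ω_n` prepended at time `0`, and its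
Lukasiewicz path is `S'(m + 1) = (#𝒫_n - 1) + S(m)`; we induct on `n`.

If `𝒫_n ≠ 0`, then `S'(1) ≥ 0`, so the ladder epochs of `S'` are `0` followed by the `T(k) + 1`:
the list `(𝒬(T̃⁻¹(n)), …, 𝒬(1))` gains `𝒬'(1) = 𝒫_n` at its end, exactly as `Φ` grafts `𝒫_n`.

If `𝒫_n = 0`, the first positive ladder epoch of `S'` is `τ₁ + 1`, where `τ₁ = T(j)` is the first
time `S` reaches level `1`, and after it the ladder epochs of `S'` are again the `T(k) + 1`,
`k ≥ j`. The entries `𝒬(1), …, 𝒬(j - 1)` connect ladder epochs at height `0` and so carry a single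
atom, while `𝒬(j)` carries at least two; hence `Φ` strips the stubs `𝒬(1), …, 𝒬(j - 1)` and removes
the top atom of `𝒬(j)`, and the undershoot of `S'` at `τ₁ + 1` is indeed one more than that of `S`.
If `S` does not reach level `1` by time `n`, everything is stripped and both sides are empty.
-/
def firstTime (P : ℕ → Prop) : ℕ∞ := sInf {x : ℕ∞ | ∃ m : ℕ, x = (m : ℕ∞) ∧ P m}

section FirstTime

variable {P : ℕ → Prop}

theorem firstTime_le {m : ℕ} (h : P m) : firstTime P ≤ m :=
  sInf_le ⟨m, rfl, h⟩

theorem le_firstTime {a : ℕ∞} (h : ∀ m, P m → a ≤ m) : a ≤ firstTime P :=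
  le_sInf <| by rintro x ⟨m, rfl, hm⟩; exact h m hm

theorem not_of_lt_firstTime {m : ℕ} (h : (m : ℕ∞) < firstTime P) : ¬ P m :=
  fun hm => (firstTime_le hm).not_gt h

theorem firstTime_eq_top_iff : firstTime P = ⊤ ↔ ∀ m, ¬ P m := by
  simp only [firstTime, sInf_eq_top, Set.mem_ofPred_eq, forall_exists_index, and_imp]
  exact ⟨fun h m hm => ENat.natCast_ne_top m (h _ m rfl hm), fun h _ m _ hm => absurd hm (h m)⟩

theorem firstTime_eq_find (h : ∃ m, P m) : firstTime P = Nat.find h :=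
  le_antisymm (firstTime_le (Nat.find_spec h))
    (le_firstTime fun _ hm => by exact_mod_cast Nat.find_min' h hm)

theorem firstTime_eq_natCast_iff {m : ℕ} : firstTime P = m ↔ P m ∧ ∀ i < m, ¬ P i := by
  by_cases h : ∃ i, P i
  · rw [firstTime_eq_find h, Nat.cast_inj, Nat.find_eq_iff]
  · push Not at h
    simp [firstTime_eq_top_iff.mpr h, h]

theorem firstTime_eq_add (t : ℕ) (h : ∀ m < t, ¬ P m) :
    firstTime P = firstTime (fun m => P (m + t)) + t := by
  by_cases hP : ∃ m, P m
  · have hPt : ∃ m, P (m + t) := by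
      obtain ⟨m, hm⟩ := hP
      exact ⟨m - t, by rwa [Nat.sub_add_cancel (not_lt.mp fun hlt => h m hlt hm)]⟩
    rw [firstTime_eq_find hP, firstTime_eq_find hPt, ← Nat.cast_add,
      Nat.find_add (not_lt.mp fun hlt => h _ hlt (Nat.find_spec hP))]
  · push Not at hP
    rw [firstTime_eq_top_iff.mpr hP, firstTime_eq_top_iff.mpr fun m => hP (m + t), top_add]

end FirstTime

section Walk

variable (η : Om)

theorem Sw_natCast (m : ℕ) :
    Sw η m = ∑ k ∈ Finset.range m, ((Multiset.card (Pc η k) : ℤ) - 1) := by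
  rw [Sw, if_pos (Int.natCast_nonneg m), Int.toNat_natCast]

@[simp]
theorem Sw_zero : Sw η 0 = 0 := by
  simpa using Sw_natCast η 0

theorem Sw_succ (m : ℕ) :
    Sw η ((m + 1 : ℕ) : ℤ) = Sw η m + ((Multiset.card (Pc η m) : ℤ) - 1) := by
  rw [Sw_natCast, Sw_natCast, Finset.sum_range_succ]

theorem theta_theta (a b : ℤ) : theta a (theta b η) = theta (b + a) η := by
  funext k
  simp [theta, add_assoc]

theorem Pc_theta (t k : ℤ) : Pc (theta t η) k = Pc η (t + k) := rfl

theorem Sw_theta (t m : ℕ) : Sw (theta t η) m = Sw η ((m + t : ℕ) : ℤ) - Sw η t := by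
  rw [Sw_natCast, Sw_natCast, Sw_natCast, add_comm m, Finset.sum_range_add, add_sub_cancel_left]
  exact Finset.sum_congr rfl fun k _ => by rw [Pc_theta]; push_cast; ring_nf

theorem Sw_theta_neg_one (m : ℕ) :
    Sw (theta (-1) η) ((m + 1 : ℕ) : ℤ) = ((Multiset.card (Pc η (-1)) : ℤ) - 1) + Sw η m := by
  rw [Sw_natCast, Sw_natCast, Finset.sum_range_succ', add_comm]
  congr 1
  exact Finset.sum_congr rfl fun k _ => by rw [Pc_theta]; push_cast; ring_nf

theorem dual_natCast_succ (ω : Om) (n : ℕ) :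
    dual ((n + 1 : ℕ) : ℤ) ω = theta (-1) (dual n ω) := by
  funext k
  simp only [dual, theta]
  push_cast
  ring_nf

theorem Pc_dual_neg_one (ω : Om) (n : ℤ) : Pc (dual n ω) (-1) = Pc ω n := by
  simp [Pc, dual]

end Walk

section Ladder

variable {η : Om}

@[simp]
theorem ladderT_zero : ladderT η 0 = 0 := rfl

theorem ladderT_succ (η : Om) (k : ℕ) :
    ladderT η (k + 1) =
      firstTime (fun m => ∃ j : ℕ, ladderT η k = j ∧ j < m ∧ Sw η j ≤ Sw η m) := by
  simp only [ladderT, firstTime, exists_and_left]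

theorem ladderT_succ_of_eq_natCast {k j : ℕ} (h : ladderT η k = j) :
    ladderT η (k + 1) = firstTime (fun m => j < m ∧ Sw η j ≤ Sw η m) := by
  simp [ladderT_succ, h]

theorem ladderT_succ_of_eq_top {k : ℕ} (h : ladderT η k = ⊤) : ladderT η (k + 1) = ⊤ := by
  simp [ladderT_succ, h, firstTime_eq_top_iff]

theorem ladderT_mono : Monotone (ladderT η) := by
  refine monotone_nat_of_le_succ fun k => ?_
  cases h : ladderT η k with
  | top => rw [ladderT_succ_of_eq_top h]
  | coe j => exact (ladderT_succ_of_eq_natCast h).symm ▸ le_firstTime fun m hm => mod_cast hm.1.le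

theorem le_ladderT (k : ℕ) : (k : ℕ∞) ≤ ladderT η k := by
  induction k with
  | zero => simp
  | succ k ih =>
    cases h : ladderT η k with
    | top => simp [ladderT_succ_of_eq_top h]
    | coe j =>
      rw [ladderT_succ_of_eq_natCast h]
      refine le_firstTime fun m hm => ?_
      have : k ≤ j := by exact_mod_cast h ▸ ih
      exact_mod_cast (show k + 1 ≤ m by omega)

theorem ladderT_succ_spec {k t s : ℕ} (ht : ladderT η k = t) (hs : ladderT η (k + 1) = s) :
    t < s ∧ Sw η t ≤ Sw η s ∧ ∀ i : ℕ, t < i → i < s → Sw η i < Sw η t := by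
  rw [ladderT_succ_of_eq_natCast ht, firstTime_eq_natCast_iff] at hs
  obtain ⟨⟨hts, hS⟩, hmin⟩ := hs
  exact ⟨hts, hS, fun i hti his => not_le.mp fun hle => hmin i his ⟨hti, hle⟩⟩

theorem exists_ladderT_eq_of_le {k l : ℕ} (hkl : k ≤ l) (h : ladderT η l ≠ ⊤) :
    ∃ t : ℕ, ladderT η k = t :=
  (ENat.ne_top_iff_exists.mp (ne_top_of_le_ne_top h (ladderT_mono hkl))).imp fun _ => Eq.symm

theorem Sw_ladderT_nonneg {k t : ℕ} (h : ladderT η k = t) : 0 ≤ Sw η t := by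
  induction k generalizing t with
  | zero =>
    obtain rfl : t = 0 := by simpa using h.symm
    simp
  | succ k ih =>
    obtain ⟨r, hr⟩ := exists_ladderT_eq_of_le k.le_succ (h ▸ ENat.natCast_ne_top t)
    exact (ih hr).trans (ladderT_succ_spec hr h).2.1

theorem le_tildeTinv_iff {k n : ℕ} : k ≤ tildeTinv η n ↔ ladderT η k ≤ n := by
  have hbdd : BddAbove {k : ℕ | ladderT η k ≤ n} :=
    ⟨n, fun k hk => by exact_mod_cast le_ladderT k |>.trans hk⟩
  refine ⟨fun hk => (ladderT_mono hk).trans (Nat.sSup_mem ⟨0, by simp⟩ hbdd),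
    fun hk => le_csSup hbdd hk⟩

theorem tildeTinv_zero : tildeTinv η 0 = 0 :=
  Nat.lt_one_iff.mp <| not_le.mp fun h => by
    simpa using (le_ladderT 1).trans (le_tildeTinv_iff.mp h)

theorem exists_ladderT_eq_of_le_tildeTinv {k n : ℕ} (h : k ≤ tildeTinv η n) :
    ∃ t : ℕ, ladderT η k = t ∧ t ≤ n := by
  have hk := le_tildeTinv_iff.mp h
  obtain ⟨t, ht⟩ := ENat.ne_top_iff_exists.mp (ne_top_of_le_ne_top (ENat.natCast_ne_top n) hk)
  exact ⟨t, ht.symm, by exact_mod_cast ht ▸ hk⟩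

end Ladder

section Upsilon

theorem upsilon_zero (ν : PtM) : upsilon 0 ν = ν := by
  rw [upsilon, Nat.sub_zero, List.take_of_length_le (Multiset.length_sort _).le,
    Multiset.sort_eq]

theorem card_upsilon (j : ℕ) (ν : PtM) :
    Multiset.card (upsilon j ν) = Multiset.card ν - j := by
  rw [upsilon, Multiset.coe_card, List.length_take, Multiset.length_sort]
  omega

theorem upsilon_succ (j : ℕ) (ν : PtM) : upsilon (j + 1) ν = upsilon 1 (upsilon j ν) := by
  have hsort : Multiset.sort (upsilon j ν) (· ≤ ·) = (ν.sort (· ≤ ·)).take (Multiset.card ν - j) :=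
    List.mergeSort_eq_self _ (Multiset.pairwise_sort _ _).take
  conv_rhs => rw [upsilon, hsort, card_upsilon, List.take_take]
  rw [upsilon]
  congr 2
  omega

end Upsilon

section Qcal

variable {η : Om}

theorem tauUp_theta_ladderT {k t s : ℕ} (ht : ladderT η k = t) (hs : ladderT η (k + 1) = s) :
    tauUp (theta t η) 0 = (s - t : ℕ) := by
  rw [ladderT_succ_of_eq_natCast ht, firstTime_eq_add t fun m hm h => by omega] at hs
  rw [ENat.natCast_sub, ← hs,
    (ENat.addLECancellable_of_ne_top (ENat.natCast_ne_top t)).add_tsub_cancel_right, tauUp]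
  congr 1
  ext x
  simp only [Set.mem_ofPred_eq, Sw_theta]
  constructor <;> rintro ⟨m, rfl, h⟩ <;> exact ⟨m, rfl, by omega⟩

theorem Qcal_succ {k t s : ℕ} (ht : ladderT η k = t) (hs : ladderT η (k + 1) = s) :
    Qcal η (k + 1) = upsilon (Sw η t - Sw η (s - 1 : ℤ)).toNat (Pc η (s - 1 : ℤ)) := by
  have hts := (ladderT_succ_spec ht hs).1
  have hsub : ((s - t : ℕ) : ℤ) - 1 = ((s - 1 - t : ℕ) : ℤ) := by omega
  have hadd : (((s - 1 - t + t : ℕ)) : ℤ) = (s : ℤ) - 1 := by omega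
  simp only [Qcal, muU, zetaU, tauUpN, Nat.add_sub_cancel, ht, ENat.toNat_natCast,
    tauUp_theta_ladderT ht hs, hsub, Sw_theta, Pc_theta, hadd]
  congr 2
  · ring
  · omega

theorem card_Qcal_succ {k t s : ℕ} (ht : ladderT η k = t) (hs : ladderT η (k + 1) = s) :
    (Multiset.card (Qcal η (k + 1)) : ℤ) = Sw η s - Sw η t + 1 := by
  obtain ⟨hts, hle, hmin⟩ := ladderT_succ_spec ht hs
  have hs1 : ((s - 1 : ℕ) : ℤ) = (s : ℤ) - 1 := by omega
  have hcard := Sw_succ η (s - 1)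
  rw [Nat.sub_add_cancel (by omega), hs1] at hcard
  have hprev : Sw η (s - 1 : ℤ) ≤ Sw η t := by
    rcases (Nat.le_sub_one_of_lt hts).eq_or_lt with heq | hlt
    · rw [← hs1, heq]
    · exact hs1 ▸ (hmin (s - 1) hlt (by omega)).le
  rw [Qcal_succ ht hs, card_upsilon, Nat.cast_sub (by omega)]
  omega

end Qcal

section TauUpOne

variable {η : Om}

theorem Sw_le_zero_of_lt_tauUp_one {m : ℕ} (h : (m : ℕ∞) < tauUp η 1) : Sw η m ≤ 0 := by
  have := not_of_lt_firstTime h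
  rcases m with _ | m
  · simp
  · simp only [Nat.succ_pos, true_and, not_le] at this
    omega

theorem Sw_ladderT_eq_zero {k m : ℕ} (hk : ladderT η k = m) (h : (m : ℕ∞) < tauUp η 1) :
    Sw η m = 0 :=
  le_antisymm (Sw_le_zero_of_lt_tauUp_one h) (Sw_ladderT_nonneg hk)

theorem tauUp_one_spec {t : ℕ} (h : tauUp η 1 = t) :
    0 < t ∧ 1 ≤ Sw η t ∧ ∀ i < t, Sw η i ≤ 0 :=
  have h' := firstTime_eq_natCast_iff.mp h
  ⟨h'.1.1, h'.1.2, fun _ hi => Sw_le_zero_of_lt_tauUp_one (h ▸ mod_cast hi)⟩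

theorem exists_ladderT_eq_tauUp_one {t : ℕ} (h : tauUp η 1 = t) :
    ∃ j, ladderT η (j + 1) = t := by
  obtain ⟨ht0, ht, hbefore⟩ := tauUp_one_spec h
  obtain ⟨a, ha, hat⟩ := exists_ladderT_eq_of_le_tildeTinv (le_refl (tildeTinv η t))
  rcases hat.eq_or_lt with rfl | hlt
  · obtain ⟨j, hj⟩ := Nat.exists_eq_add_one_of_ne_zero (n := tildeTinv η a) fun h0 => by
      rw [h0, ladderT_zero] at ha
      exact ht0.ne (by exact_mod_cast ha)
    exact ⟨j, hj ▸ ha⟩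
  · have hnext : tildeTinv η t + 1 ≤ tildeTinv η t := by
      rw [le_tildeTinv_iff, ladderT_succ_of_eq_natCast ha]
      exact firstTime_le ⟨hlt, (hbefore a hlt).trans (by omega)⟩
    omega

theorem card_Qcal_lt_two {k : ℕ} (h : ladderT η (k + 1) < tauUp η 1) :
    Multiset.card (Qcal η (k + 1)) < 2 := by
  obtain ⟨s, hs⟩ := ENat.ne_top_iff_exists.mp (ne_top_of_lt h)
  obtain ⟨r, hr⟩ := exists_ladderT_eq_of_le k.le_succ (hs ▸ ENat.natCast_ne_top s)
  have hrs : (r : ℕ∞) < s := by exact_mod_cast (ladderT_succ_spec hr hs.symm).1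
  have := card_Qcal_succ hr hs.symm
  rw [Sw_ladderT_eq_zero hs.symm (hs ▸ h), Sw_ladderT_eq_zero hr (hrs.trans (hs ▸ h))] at this
  omega

theorem two_le_card_Qcal {k t : ℕ} (hk : ladderT η (k + 1) = t) (hτ : tauUp η 1 = t) :
    2 ≤ Multiset.card (Qcal η (k + 1)) := by
  obtain ⟨r, hr⟩ := exists_ladderT_eq_of_le k.le_succ (hk ▸ ENat.natCast_ne_top t)
  have hrt : (r : ℕ∞) < t := by exact_mod_cast (ladderT_succ_spec hr hk).1
  have := card_Qcal_succ hr hk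
  rw [Sw_ladderT_eq_zero hr (hτ ▸ hrt)] at this
  have := (tauUp_one_spec hτ).2.1
  omega

end TauUpOne

section Prepend

variable {η : Om}

local notation "η'" => theta (-1) η

theorem ladderT_theta_neg_one_add {K l : ℕ} (h : ladderT η' K = ladderT η l + 1) (k : ℕ) :
    ladderT η' (K + k) = ladderT η (l + k) + 1 := by
  induction k with
  | zero => exact h
  | succ k ih =>
    cases ht : ladderT η (l + k) with
    | top =>
      rw [ht, top_add] at ih
      simp [← add_assoc, ladderT_succ_of_eq_top ht, ladderT_succ_of_eq_top ih]
    | coe t =>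
      replace ih : ladderT η' (K + k) = ((t + 1 : ℕ) : ℕ∞) := by rw [ih, ht]; push_cast; rfl
      rw [← add_assoc, ← add_assoc, ladderT_succ_of_eq_natCast ih, ladderT_succ_of_eq_natCast ht,
        firstTime_eq_add 1 fun m hm _ => by omega]
      congr 2
      ext m
      rw [Sw_theta_neg_one, Sw_theta_neg_one]
      omega

theorem ladderT_theta_neg_one_one :
    ladderT η' 1 = firstTime (fun m => 1 - Multiset.card (Pc η (-1)) ≤ Sw η m) + 1 := by
  rw [ladderT_succ_of_eq_natCast (k := 0) (by simp : ladderT η' 0 = (0 : ℕ)),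
    firstTime_eq_add 1 fun m hm h => by omega]
  congr 2
  ext m
  rw [Sw_theta_neg_one, Nat.cast_zero, Sw_zero]
  omega

theorem ladderT_theta_neg_one_one_of_ne_zero (hc : Pc η (-1) ≠ 0) :
    ladderT η' 1 = ladderT η 0 + 1 := by
  rw [ladderT_theta_neg_one_one, ladderT_zero, ← Nat.cast_zero,
    firstTime_eq_natCast_iff.mpr ⟨?_, fun _ hi => absurd hi (Nat.not_lt_zero _)⟩]
  have := Multiset.card_pos.mpr hc
  simp only [Nat.cast_zero, Sw_zero]
  omega

theorem ladderT_theta_neg_one_one_of_eq_zero (hc : Pc η (-1) = 0) :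
    ladderT η' 1 = tauUp η 1 + 1 := by
  rw [ladderT_theta_neg_one_one, hc, tauUp]
  congr 2
  ext m
  rcases m with _ | m <;> simp

theorem tildeTinv_theta_neg_one {K l n : ℕ}
    (hshift : ∀ k, ladderT η' (K + k) = ladderT η (l + k) + 1) (hl : l ≤ tildeTinv η n) :
    tildeTinv η' (n + 1) = K + (tildeTinv η n - l) := by
  have h1 : ((n + 1 : ℕ) : ℕ∞) = n + 1 := by push_cast; rfl
  refine le_antisymm (not_lt.mp fun hlt => ?_) (le_tildeTinv_iff.mpr ?_)
  · have hle := le_tildeTinv_iff.mp (Order.add_one_le_of_lt hlt)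
    rw [add_assoc, hshift, h1, ENat.add_le_add_iff_right ENat.one_ne_top,
      ← le_tildeTinv_iff] at hle
    omega
  · rw [hshift, Nat.add_sub_cancel' hl, h1, ENat.add_le_add_iff_right ENat.one_ne_top]
    exact le_tildeTinv_iff.mp le_rfl

theorem Qcal_theta_neg_one_succ {K l t : ℕ} (hK : ladderT η' K = t + 1) (hl : ladderT η l = t) :
    Qcal η' (K + 1) = Qcal η (l + 1) := by
  have hK' : ladderT η' K = (t + 1 : ℕ) := by rw [hK]; push_cast; rfl
  simp only [Qcal, Nat.add_sub_cancel, hK', hl, ENat.toNat_natCast, theta_theta]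
  congr 3
  push_cast
  ring

theorem Qcal_theta_neg_one_one_of_ne_zero (hc : Pc η (-1) ≠ 0) : Qcal η' 1 = Pc η (-1) := by
  have h1 : ladderT η' (0 + 1) = (1 : ℕ) := by
    rw [ladderT_theta_neg_one_one_of_ne_zero hc]; simp
  refine (Qcal_succ (k := 0) (t := 0) (by simp) h1).trans ?_
  simp [upsilon_zero, Pc_theta]

theorem Qcal_theta_neg_one_one_of_eq_zero (hc : Pc η (-1) = 0) {j t : ℕ}
    (hτ : tauUp η 1 = t) (hj : ladderT η (j + 1) = t) :
    Qcal η' 1 = upsilon 1 (Qcal η (j + 1)) := by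
  obtain ⟨ht0, -, hbefore⟩ := tauUp_one_spec hτ
  obtain ⟨r, hr⟩ := exists_ladderT_eq_of_le j.le_succ (hj ▸ ENat.natCast_ne_top t)
  have hrt : (r : ℕ∞) < tauUp η 1 := by rw [hτ]; exact_mod_cast (ladderT_succ_spec hr hj).1
  have h1 : ladderT η' (0 + 1) = (t + 1 : ℕ) := by
    rw [ladderT_theta_neg_one_one_of_eq_zero hc, hτ]; push_cast; rfl
  have ht1 : ((t - 1 : ℕ) : ℤ) = t - 1 := by omega
  have hprev : Sw η' t = Sw η (t - 1 : ℤ) - 1 := by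
    have := Sw_theta_neg_one η (t - 1)
    rw [Nat.sub_add_cancel ht0, hc, ht1] at this
    simp only [Multiset.card_zero, Nat.cast_zero] at this
    omega
  have hsign := ht1 ▸ hbefore (t - 1) (by omega)
  refine (Qcal_succ (k := 0) (t := 0) (by simp) h1).trans ?_
  -- the undershoot of `S'` at `τ₁ + 1` is one more than that of `S` at `τ₁`
  rw [Qcal_succ hr hj, Sw_ladderT_eq_zero hr hrt, ← upsilon_succ,
    show ((t + 1 : ℕ) : ℤ) - 1 = t by push_cast; ring, hprev, Pc_theta, Nat.cast_zero, Sw_zero]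
  congr 1
  omega

end Prepend

section Phi

theorem phiSp_reverse_of_ne_zero (L : List PtM) {ν : PtM} (hν : ν ≠ 0) :
    phiSp L.reverse ν = (ν :: L).reverse := by
  rw [phiSp, if_neg hν, List.reverse_cons]

theorem phiSp_reverse_zero_of_card_lt_two {L : List PtM}
    (hL : ∀ x ∈ L, Multiset.card x < 2) : phiSp L.reverse 0 = [] := by
  rw [phiSp, if_pos rfl, List.reverse_reverse,
    List.dropWhile_eq_nil_iff.mpr fun x hx => decide_eq_true (hL x hx)]

theorem phiSp_reverse_zero_of_two_le_card {L₁ L₂ : List PtM} {μ : PtM}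
    (hL₁ : ∀ x ∈ L₁, Multiset.card x < 2) (hμ : 2 ≤ Multiset.card μ) :
    phiSp (L₁ ++ μ :: L₂).reverse 0 = (upsilon 1 μ :: L₂).reverse := by
  rw [phiSp, if_pos rfl, List.reverse_reverse,
    List.dropWhile_append_of_pos fun x hx => decide_eq_true (hL₁ x hx),
    List.dropWhile_cons_of_neg (by simpa using hμ.not_gt)]

end Phi

def ladderSpine (η : Om) (n : ℕ) : List PtM :=
  ((List.range' 1 (tildeTinv η n)).map (Qcal η)).reverse

theorem map_range_sub_eq_reverse {α : Type*} (f : ℕ → α) (N : ℕ) :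
    (List.range N).map (fun i => f (N - i)) = ((List.range' 1 N).map f).reverse := by
  rw [← List.map_reverse, List.reverse_range', List.map_map, Nat.add_sub_cancel_left]
  rfl

section Spine

variable {η : Om}

local notation "η'" => theta (-1) η

theorem map_Qcal_theta_neg_one_range' {K l m n : ℕ}
    (hshift : ∀ k, ladderT η' (K + k) = ladderT η (l + k) + 1) (h : l + m ≤ tildeTinv η n) :
    (List.range' (K + 1) m).map (Qcal η') = (List.range' (l + 1) m).map (Qcal η) := by
  simp only [List.range'_eq_map_range, List.map_map]
  refine List.map_congr_left fun k hk => ?_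
  obtain ⟨t, ht, -⟩ := exists_ladderT_eq_of_le_tildeTinv
    (show l + k ≤ tildeTinv η n by have := List.mem_range.mp hk; omega)
  have := Qcal_theta_neg_one_succ ((hshift k).trans (by rw [ht])) ht
  simpa only [Function.comp, add_right_comm _ 1 k] using this

theorem card_lt_two_of_mem_map_range' {m : ℕ} (h : ladderT η m < tauUp η 1) :
    ∀ x ∈ (List.range' 1 m).map (Qcal η), Multiset.card x < 2 := by
  simp only [List.mem_map, List.mem_range'_1]
  rintro _ ⟨_ | k, ⟨hk0, hk⟩, rfl⟩
  · exact absurd hk0 (by decide)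
  exact card_Qcal_lt_two ((ladderT_mono (by omega)).trans_lt h)

theorem phiSp_ladderSpine_of_ne_zero (hc : Pc η (-1) ≠ 0) (n : ℕ) :
    phiSp (ladderSpine η n) (Pc η (-1)) = ladderSpine η' (n + 1) := by
  have hshift := ladderT_theta_neg_one_add (ladderT_theta_neg_one_one_of_ne_zero hc)
  rw [ladderSpine, phiSp_reverse_of_ne_zero _ hc, ladderSpine,
    tildeTinv_theta_neg_one hshift (Nat.zero_le _), Nat.sub_zero, add_comm 1, List.range'_succ,
    List.map_cons, Qcal_theta_neg_one_one_of_ne_zero hc,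
    map_Qcal_theta_neg_one_range' hshift (by rw [zero_add])]

theorem phiSp_ladderSpine_of_lt_tauUp (hc : Pc η (-1) = 0) {n : ℕ} (hτ : (n : ℕ∞) < tauUp η 1) :
    phiSp (ladderSpine η n) 0 = ladderSpine η' (n + 1) := by
  have hN : tildeTinv η' (n + 1) = 0 := by
    refine Nat.lt_one_iff.mp (not_le.mp fun h1 => hτ.not_ge ?_)
    rw [le_tildeTinv_iff, ladderT_theta_neg_one_one_of_eq_zero hc, Nat.cast_succ,
      ENat.add_le_add_iff_right ENat.one_ne_top] at h1
    exact h1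
  rw [ladderSpine, ladderSpine, hN, List.range'_zero, List.map_nil, List.reverse_nil,
    phiSp_reverse_zero_of_card_lt_two (card_lt_two_of_mem_map_range'
      ((le_tildeTinv_iff.mp le_rfl).trans_lt hτ))]

theorem phiSp_ladderSpine_of_tauUp_le (hc : Pc η (-1) = 0) {n t : ℕ} (hτ : tauUp η 1 = t)
    (htn : t ≤ n) : phiSp (ladderSpine η n) 0 = ladderSpine η' (n + 1) := by
  obtain ⟨j, hj⟩ := exists_ladderT_eq_tauUp_one hτ
  have hjN : j + 1 ≤ tildeTinv η n := le_tildeTinv_iff.mpr (hj ▸ mod_cast htn)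
  have hshift := ladderT_theta_neg_one_add (K := 1) (l := j + 1)
    ((ladderT_theta_neg_one_one_of_eq_zero hc).trans (by rw [hτ, hj]))
  have hsplit : List.range' 1 (tildeTinv η n) =
      List.range' 1 j ++ (j + 1) :: List.range' (j + 1 + 1) (tildeTinv η n - (j + 1)) := by
    rw [← List.range'_succ, add_comm j 1, List.range'_append_1]
    congr 1
    omega
  obtain ⟨r, hr⟩ := exists_ladderT_eq_of_le j.le_succ (hj ▸ ENat.natCast_ne_top t)
  have hjτ : ladderT η j < tauUp η 1 := by
    rw [hr, hτ]; exact_mod_cast (ladderT_succ_spec hr hj).1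
  rw [ladderSpine, hsplit, List.map_append, List.map_cons,
    phiSp_reverse_zero_of_two_le_card (card_lt_two_of_mem_map_range' hjτ)
      (two_le_card_Qcal hj hτ),
    ladderSpine, tildeTinv_theta_neg_one hshift hjN, add_comm 1, List.range'_succ, List.map_cons,
    Qcal_theta_neg_one_one_of_eq_zero hc hτ hj,
    map_Qcal_theta_neg_one_range' hshift (Nat.add_sub_of_le hjN).le]

theorem phiSp_ladderSpine (η : Om) (n : ℕ) :
    phiSp (ladderSpine η n) (Pc η (-1)) = ladderSpine (theta (-1) η) (n + 1) := by
  by_cases hc : Pc η (-1) = 0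
  · rw [hc]
    rcases lt_or_ge (n : ℕ∞) (tauUp η 1) with hτ | hτ
    · exact phiSp_ladderSpine_of_lt_tauUp hc hτ
    · obtain ⟨t, ht⟩ := ENat.ne_top_iff_exists.mp (ne_top_of_le_ne_top (ENat.natCast_ne_top n) hτ)
      exact phiSp_ladderSpine_of_tauUp_le hc ht.symm (by exact_mod_cast ht ▸ hτ)
  · exact phiSp_ladderSpine_of_ne_zero hc n

end Spine

theorem stmt11 (ω : Om) (n : ℕ) :
    spine ω n = (List.range (tildeTinv (dual (n : ℤ) ω) n)).map
        (fun i => Qcal (dual (n : ℤ) ω) (tildeTinv (dual (n : ℤ) ω) n - i)) := by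
  rw [map_range_sub_eq_reverse, ← ladderSpine]
  induction n with
  | zero => simp [ladderSpine, tildeTinv_zero, spine]
  | succ n ih =>
    rw [spine, ih, ← Pc_dual_neg_one ω n, phiSp_ladderSpine, dual_natCast_succ]

end
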